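/- If x and y are distinct variables lying in two different equations of an equation system Ξ (i.e., [X ≡ x′, t₁] ∈ Ξ with x ∈ X, [Y ≡ y′, t₂] ∈ Ξ with y ∈ Y, and x′ ≠ y′), then the equation system Ξ′ produced by union_Ξ(x, y) has exactly one fewer root than Ξ: one of x′, y′ ceases to be a root and no new roots are created. -/

import Mathlib

namespace RT

/-- The polynomial functor whose greatest fixed point is the set `T^∞` of
possibly infinite trees over variables `ℕ` and constructors `ℕ` with arities `ar`. -/
def TreeP (ar : ℕ → ℕ) : PFunctor :=
  ⟨ℕ ⊕ ℕ, fun a =>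
    match a with
    | Sum.inl _ => Fin 0
    | Sum.inr f => Fin (ar f)⟩

/-- Possibly infinite trees: the greatest fixed point of `T ::= 𝕍 | ℂⁿ(T₁,…,Tₙ)`. -/
def InfTree (ar : ℕ → ℕ) : Type := (TreeP ar).M

/-- A variable leaf as a possibly infinite tree. -/
def varLeaf (ar : ℕ → ℕ) (x : ℕ) : InfTree ar :=
  PFunctor.M.mk ⟨Sum.inl x, Fin.elim0⟩

/-- A constant (nullary constructor application) as a possibly infinite tree. -/
def constLeaf (ar : ℕ → ℕ) (f : ℕ) (hf : ar f = 0) : InfTree ar :=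
  PFunctor.M.mk ⟨Sum.inr f, fun i => absurd i.isLt (by omega)⟩

/-- The subtree relation on possibly infinite trees, generated by
`t ∈ subtrees(t)` and `t ∈ subtrees(tᵢ) → t ∈ subtrees(fⁿ(…,tᵢ,…))`. -/
inductive Subtree (ar : ℕ → ℕ) : InfTree ar → InfTree ar → Prop
  | refl (t : InfTree ar) : Subtree ar t t
  | step (s t : InfTree ar) (i : (TreeP ar).B (PFunctor.M.dest t).1) :
      Subtree ar s ((PFunctor.M.dest t).2 i) → Subtree ar s t

/-- A rational tree is a possibly infinite tree with finitely many subtrees. -/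
def IsRational {ar : ℕ → ℕ} (r : InfTree ar) : Prop :=
  {s | Subtree ar s r}.Finite

/-- The label (variable `Sum.inl x` or constructor `Sum.inr f`) of a possibly
infinite tree at a given path, if the path is valid. -/
def InfTree.labelAt {ar : ℕ → ℕ} : List ℕ → InfTree ar → Option (ℕ ⊕ ℕ)
  | [], t => some (PFunctor.M.dest t).1
  | i :: p, t =>
      match PFunctor.M.dest t with
      | ⟨Sum.inl _, _⟩ => none
      | ⟨Sum.inr f, ch⟩ => if h : i < ar f then InfTree.labelAt p (ch ⟨i, h⟩) else none

/-- μ-trees: the least fixed point of `T^μ ::= 𝕍 | ℂⁿ(T^μ₁,…,T^μₙ) | μ𝕍. T^μ`. -/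
inductive MuTree (ar : ℕ → ℕ) : Type
  | var : ℕ → MuTree ar
  | cons : (f : ℕ) → (Fin (ar f) → MuTree ar) → MuTree ar
  | mu : ℕ → MuTree ar → MuTree ar

namespace MuTree

variable {ar : ℕ → ℕ}

/-- Size of a μ-tree. -/
def size : MuTree ar → ℕ
  | .var _ => 1
  | .cons _ args => 1 + ∑ i, (args i).size
  | .mu _ t => 1 + t.size

/-- Free variables of a μ-tree (μ binds its variable). -/
def freeVars : MuTree ar → Finset ℕ
  | .var x => {x}
  | .cons _ args => Finset.univ.sup fun i => (args i).freeVars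
  | .mu x t => t.freeVars.erase x

/-- A variable fresh for a given finite set of variables. -/
def freshVar (s : Finset ℕ) : ℕ := s.sup id + 1

/-- Renaming of a free variable (to a fresh one, when used for α-conversion). -/
def rename : MuTree ar → ℕ → ℕ → MuTree ar
  | .var y, x, z => if y = x then .var z else .var y
  | .cons f args, x, z => .cons f fun i => (args i).rename x z
  | .mu y t, x, z => if y = x then .mu y t else .mu y (t.rename x z)

lemma size_pos (t : MuTree ar) : 0 < t.size := by
  cases t <;> simp [size]

lemma size_rename (t : MuTree ar) (x z : ℕ) : (t.rename x z).size = t.size := by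
  induction t with
  | var y => by_cases h : y = x <;> simp [rename, size, h]
  | cons f args ih => simp [rename, size, ih]
  | mu y t ih => by_cases h : y = x <;> simp [rename, size, h, ih]

lemma size_arg_lt {f : ℕ} (args : Fin (ar f) → MuTree ar) (i : Fin (ar f)) :
    (args i).size < (MuTree.cons f args).size := by
  have h : (args i).size ≤ ∑ j, (args j).size :=
    Finset.single_le_sum (f := fun j => (args j).size) (fun j _ => Nat.zero_le _)
      (Finset.mem_univ i)
  simp only [size]; omega

/-- Capture-avoiding substitution `t[x ↦ s]` on μ-trees. -/
def subst : MuTree ar → ℕ → MuTree ar → MuTree ar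
  | .var y, x, s => if y = x then s else .var y
  | .cons f args, x, s => .cons f fun i => (args i).subst x s
  | .mu y t, x, s =>
      if y = x then .mu y t
      else
        let z := freshVar (s.freeVars ∪ t.freeVars ∪ {x, y})
        .mu z ((t.rename y z).subst x s)
  termination_by t _ _ => t.size
  decreasing_by
  · exact size_arg_lt args i
  · simp [size_rename, size]

/-- The unfolding step `→_μ` : performs `μx. t →_μ t[x ↦ μx. t]` at all
top-level occurrences of μ-binders (homomorphic extension). -/
def unfoldStep : MuTree ar → MuTree ar
  | .var x => .var x
  | .cons f args => .cons f fun i => (args i).unfoldStep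
  | .mu x t => t.subst x (.mu x t)

/-- The label of a μ-tree at a path: `none` at (or below) a not-yet-unfolded μ-binder. -/
def labelAt : MuTree ar → List ℕ → Option (ℕ ⊕ ℕ)
  | .var x, [] => some (Sum.inl x)
  | .var _, _ :: _ => none
  | .cons f _, [] => some (Sum.inr f)
  | .cons _ args, i :: p => if h : i < ar _ then (args ⟨i, h⟩).labelAt p else none
  | .mu _ _, _ => none

/-- Well-formedness of μ-trees: a μ-binder may only be applied directly to a
constructor application. -/
inductive Wf : MuTree ar → Prop
  | var (x : ℕ) : Wf (.var x)
  | cons (f : ℕ) (args : Fin (ar f) → MuTree ar) : (∀ i, Wf (args i)) → Wf (.cons f args)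
  | mu (x f : ℕ) (args : Fin (ar f) → MuTree ar) :
      Wf (.cons f args) → Wf (.mu x (.cons f args))

end MuTree

/-- Syntactic subterms of a μ-tree. -/
inductive MuSub {ar : ℕ → ℕ} : MuTree ar → MuTree ar → Prop
  | refl (t : MuTree ar) : MuSub t t
  | cons (s : MuTree ar) (f : ℕ) (args : Fin (ar f) → MuTree ar) (i : Fin (ar f)) :
      MuSub s (args i) → MuSub s (.cons f args)
  | mu (s : MuTree ar) (x : ℕ) (t : MuTree ar) : MuSub s t → MuSub s (.mu x t)

/-- `UnfoldsTo t r`: the possibly infinite tree `r` is the limit of the iterated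
unfolding steps applied to the μ-tree `t`: the label of the `n`-th unfolding at
every path eventually stabilizes to the label of `r` at that path. -/
def UnfoldsTo {ar : ℕ → ℕ} (t : MuTree ar) (r : InfTree ar) : Prop :=
  ∀ p : List ℕ, ∃ N : ℕ, ∀ n ≥ N, (MuTree.unfoldStep^[n] t).labelAt p = InfTree.labelAt p r

end RT

namespace RT
end RT

namespace RT

variable {ar : ℕ → ℕ}

/-- Finite trees: the least fixed point of `T ::= 𝕍 | ℂⁿ(T₁,…,Tₙ)`. -/
inductive FTree (ar : ℕ → ℕ) : Type
  | var : ℕ → FTree ar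
  | cons : (f : ℕ) → (Fin (ar f) → FTree ar) → FTree ar

/-- Height of a finite tree: `0` for a variable, one plus the maximum height
of the arguments for a constructor application. -/
def FTree.height : FTree ar → ℕ
  | .var _ => 0
  | .cons _ args => 1 + Finset.univ.sup fun i => (args i).height

/-- Variables occurring in a finite tree. -/
def FTree.vars : FTree ar → Finset ℕ
  | .var x => {x}
  | .cons _ args => Finset.univ.sup fun i => (args i).vars

/-- A head tree: a constructor applied to variables. -/
structure HeadTree (ar : ℕ → ℕ) where
  f : ℕ
  args : Fin (ar f) → ℕ

noncomputable instance : DecidableEq (HeadTree ar) := Classical.decEq _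

/-- A head tree as a finite tree. -/
def HeadTree.toFTree (h : HeadTree ar) : FTree ar := .cons h.f fun i => .var (h.args i)

/-- Variables of a head tree. -/
def HeadTree.vars (h : HeadTree ar) : Finset ℕ := Finset.univ.image h.args

/-- An equation `X ≡ v, t`: a set of variables, a representing variable, and an
optional head tree. -/
structure Equation (ar : ℕ → ℕ) where
  lhs : Finset ℕ
  rep : ℕ
  rhs : Option (HeadTree ar)

noncomputable instance : DecidableEq (Equation ar) := Classical.decEq _

/-- The invariant of a single equation: a non-empty left-hand side containing
the representing variable. -/
def Equation.Wf (e : Equation ar) : Prop := e.lhs.Nonempty ∧ e.rep ∈ e.lhs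

/-- All variables of an equation. -/
noncomputable def Equation.vars (e : Equation ar) : Finset ℕ :=
  e.lhs ∪ (e.rhs.elim ∅ HeadTree.vars)

/-- An equation system: a finite set of equations. -/
abbrev EqSystem (ar : ℕ → ℕ) := Finset (Equation ar)

/-- The invariants of an equation system: well-formed equations with pairwise
disjoint left-hand sides. -/
def SystemWf (Ξ : EqSystem ar) : Prop :=
  (∀ e ∈ Ξ, e.Wf) ∧ ∀ e₁ ∈ Ξ, ∀ e₂ ∈ Ξ, e₁ ≠ e₂ → Disjoint e₁.lhs e₂.lhs

/-- The domain of an equation system: the union of the left-hand sides. -/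
noncomputable def domSys (Ξ : EqSystem ar) : Finset ℕ := Ξ.biUnion Equation.lhs

/-- All variables of an equation system. -/
noncomputable def sysVars (Ξ : EqSystem ar) : Finset ℕ := Ξ.biUnion Equation.vars

/-- The equation of the system containing the given variable, if any. -/
noncomputable def findEq (Ξ : EqSystem ar) (x : ℕ) : Option (Equation ar) :=
  if h : ∃ e ∈ Ξ, x ∈ e.lhs then some h.choose else none

/-- `find`: lookup of a variable, returning the representing variable and the
optional head tree of its equation. -/
noncomputable def find (Ξ : EqSystem ar) (x : ℕ) : ℕ × Option (HeadTree ar) :=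
  match findEq Ξ x with
  | none => (x, none)
  | some e => (e.rep, e.rhs)

/-- A root of an equation system: a variable `x` with `find Ξ x = (x, t)`. -/
def IsRoot (Ξ : EqSystem ar) (x : ℕ) : Prop := (find Ξ x).1 = x

/-- The roots of an equation system lying in its domain. -/
noncomputable def rootSet (Ξ : EqSystem ar) : Finset ℕ :=
  (domSys Ξ).filter fun x => (find Ξ x).1 = x

/-- Adding an equation to a system replaces all equations whose left-hand sides
intersect that of the added equation. -/
noncomputable def addEq (Ξ : EqSystem ar) (e : Equation ar) : EqSystem ar :=
  insert e (Ξ.filter fun e' => Disjoint e'.lhs e.lhs)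

/-- `bind`: binds the given variable('s equation) to the given head tree. -/
noncomputable def bindVar (Ξ : EqSystem ar) (x : ℕ) (t : HeadTree ar) : EqSystem ar :=
  match findEq Ξ x with
  | none => addEq Ξ ⟨{x}, x, some t⟩
  | some e => addEq Ξ ⟨e.lhs, e.rep, some t⟩

/-- `union`: merges the equivalence classes of the two given variables,
optionally returning the pair of head trees bound to them before the union
if both existed. -/
noncomputable def unionVar (Ξ : EqSystem ar) (x y : ℕ) :
    EqSystem ar × Option (HeadTree ar × HeadTree ar) :=
  if x = y then (Ξ, none)
  else
    match findEq Ξ x, findEq Ξ y with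
    | none, none => (addEq Ξ ⟨{x, y}, x, none⟩, none)
    | some e, none => (addEq Ξ ⟨insert y e.lhs, e.rep, e.rhs⟩, none)
    | none, some e => (addEq Ξ ⟨insert x e.lhs, e.rep, e.rhs⟩, none)
    | some e₁, some e₂ =>
        if e₁ = e₂ then (Ξ, none)
        else
          (addEq Ξ ⟨e₁.lhs ∪ e₂.lhs, e₁.rep, e₁.rhs⟩,
           match e₁.rhs, e₂.rhs with
           | some t₁, some t₂ => some (t₁, t₂)
           | _, _ => none)

end RT
namespace RT

variable {ar : ℕ → ℕ}

/-- One coinductive step for `image`: the label and child variables of the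
image of a variable. -/
noncomputable def imageStep (Ξ : EqSystem ar) (x : ℕ) : (TreeP ar).Obj ℕ :=
  match findEq Ξ x with
  | none => ⟨Sum.inl x, Fin.elim0⟩
  | some e =>
      match e.rhs with
      | none => ⟨Sum.inl e.rep, Fin.elim0⟩
      | some h => ⟨Sum.inr h.f, h.args⟩

/-- The image `image_Ξ : 𝕍 → T^∞` of an equation system, defined coinductively:
`image_Ξ(x) = x` if `x ∉ dom(Ξ)`; `image_Ξ(x) = y` if `[X ≡ y, ⊥] ∈ Ξ, x ∈ X`;
`image_Ξ(x) = fⁿ(image_Ξ(x₁),…,image_Ξ(xₙ))` if `[X ≡ y, fⁿ(x₁,…,xₙ)] ∈ Ξ, x ∈ X`. -/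
noncomputable def image (Ξ : EqSystem ar) : ℕ → InfTree ar :=
  PFunctor.M.corec (imageStep Ξ)

/-- One coinductive step for substitution into a possibly infinite tree; the
boolean records whether we are still inside the original tree. -/
noncomputable def substInfStep (σ : ℕ → InfTree ar) :
    Bool × InfTree ar → (TreeP ar).Obj (Bool × InfTree ar) := fun p =>
  match p with
  | (false, t) => ⟨(PFunctor.M.dest t).1, fun i => (false, (PFunctor.M.dest t).2 i)⟩
  | (true, t) =>
      match PFunctor.M.dest t with
      | ⟨Sum.inl x, _⟩ =>
          ⟨(PFunctor.M.dest (σ x)).1, fun i => (false, (PFunctor.M.dest (σ x)).2 i)⟩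
      | ⟨Sum.inr f, ch⟩ => ⟨Sum.inr f, fun i => (true, ch i)⟩

/-- Application of a substitution (a map from variables to possibly infinite
trees) to a possibly infinite tree. -/
noncomputable def substInf (σ : ℕ → InfTree ar) (t : InfTree ar) : InfTree ar :=
  PFunctor.M.corec (substInfStep σ) (true, t)

/-- Application of a substitution to a finite tree (homomorphic extension). -/
noncomputable def applySubst (σ : ℕ → InfTree ar) : FTree ar → InfTree ar
  | .var x => σ x
  | .cons f args => PFunctor.M.mk ⟨Sum.inr f, fun i => applySubst σ (args i)⟩

mutual
  /-- The rational-tree unification algorithm, as a big-step inference system: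
  `Unify Ξ t₁ t₂ res` means the computation of `unify_Ξ(t₁, t₂)` terminates with
  result `res` (`some Ξ'` on success, `none` on failure). -/
  inductive Unify : EqSystem ar → FTree ar → FTree ar → Option (EqSystem ar) → Prop
    | u1 {Ξ Ξ' : EqSystem ar} {x y : ℕ} :
        unionVar Ξ x y = (Ξ', none) → Unify Ξ (.var x) (.var y) (some Ξ')
    | u2 {Ξ Ξ' : EqSystem ar} {x y : ℕ} {t₁ t₂ : HeadTree ar} {res} :
        unionVar Ξ x y = (Ξ', some (t₁, t₂)) →
        Unify Ξ' t₁.toFTree t₂.toFTree res → Unify Ξ (.var x) (.var y) res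
    | varConsBound {Ξ : EqSystem ar} {x x' : ℕ} {h : HeadTree ar} {f : ℕ}
        {args : Fin (ar f) → FTree ar} {res} :
        find Ξ x = (x', some h) →
        Unify Ξ h.toFTree (.cons f args) res → Unify Ξ (.var x) (.cons f args) res
    | varConsUnbound {Ξ : EqSystem ar} {x x' : ℕ} {f : ℕ}
        {args : Fin (ar f) → FTree ar} {res} (ys : Fin (ar f) → ℕ) :
        find Ξ x = (x', none) →
        Function.Injective ys →
        (∀ i, ys i ∉ sysVars Ξ ∪ insert x (FTree.cons f args).vars) →
        UnifySeq (bindVar Ξ x' ⟨f, ys⟩) (List.ofFn fun i => (FTree.var (ys i), args i)) res →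
        Unify Ξ (.var x) (.cons f args) res
    | consVarBound {Ξ : EqSystem ar} {x x' : ℕ} {h : HeadTree ar} {f : ℕ}
        {args : Fin (ar f) → FTree ar} {res} :
        find Ξ x = (x', some h) →
        Unify Ξ (.cons f args) h.toFTree res → Unify Ξ (.cons f args) (.var x) res
    | consVarUnbound {Ξ : EqSystem ar} {x x' : ℕ} {f : ℕ}
        {args : Fin (ar f) → FTree ar} {res} (ys : Fin (ar f) → ℕ) :
        find Ξ x = (x', none) →
        Function.Injective ys →
        (∀ i, ys i ∉ sysVars Ξ ∪ insert x (FTree.cons f args).vars) →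
        UnifySeq (bindVar Ξ x' ⟨f, ys⟩) (List.ofFn fun i => (FTree.var (ys i), args i)) res →
        Unify Ξ (.cons f args) (.var x) res
    | consCons {Ξ : EqSystem ar} {f : ℕ} {args₁ args₂ : Fin (ar f) → FTree ar} {res} :
        UnifySeq Ξ (List.ofFn fun i => (args₁ i, args₂ i)) res →
        Unify Ξ (.cons f args₁) (.cons f args₂) res
    | clash {Ξ : EqSystem ar} {f g : ℕ} {args₁ : Fin (ar f) → FTree ar}
        {args₂ : Fin (ar g) → FTree ar} :
        f ≠ g → Unify Ξ (.cons f args₁) (.cons g args₂) none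

  /-- Sequential unification of a list of pairs of trees, threading the
  equation system and propagating failure. -/
  inductive UnifySeq : EqSystem ar → List (FTree ar × FTree ar) → Option (EqSystem ar) → Prop
    | nil {Ξ : EqSystem ar} : UnifySeq Ξ [] (some Ξ)
    | consFail {Ξ : EqSystem ar} {t₁ t₂ : FTree ar} {rest} :
        Unify Ξ t₁ t₂ none → UnifySeq Ξ ((t₁, t₂) :: rest) none
    | consOk {Ξ Ξ' : EqSystem ar} {t₁ t₂ : FTree ar} {rest} {res} :
        Unify Ξ t₁ t₂ (some Ξ') → UnifySeq Ξ' rest res → UnifySeq Ξ ((t₁, t₂) :: rest) res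
end

/-- The μ-image procedure `μ-image_Ξ(x, vis)`, as an inference system threading
the partial `visited` mapping (`none` = not encountered, `some false` =
encountered once, `some true` = encountered multiple times). -/
inductive MuImage (Ξ : EqSystem ar) : ℕ → (ℕ → Option Bool) → MuTree ar → (ℕ → Option Bool) → Prop
  | noImage {x : ℕ} {vis : ℕ → Option Bool} :
      (∀ e ∈ Ξ, x ∉ e.lhs) → MuImage Ξ x vis (.var x) vis
  | noTree {x : ℕ} {vis : ℕ → Option Bool} {e : Equation ar} :
      e ∈ Ξ → x ∈ e.lhs → e.rhs = none → MuImage Ξ x vis (.var e.rep) vis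
  | varCase {x : ℕ} {vis : ℕ → Option Bool} {e : Equation ar} {h : HeadTree ar} :
      e ∈ Ξ → x ∈ e.lhs → e.rhs = some h → vis e.rep ≠ none →
      MuImage Ξ x vis (.var e.rep) (Function.update vis e.rep (some true))
  | treeCase {x : ℕ} {vis : ℕ → Option Bool} {e : Equation ar} {h : HeadTree ar}
      (ts : Fin (ar h.f) → MuTree ar) (viss : Fin (ar h.f + 1) → ℕ → Option Bool) :
      e ∈ Ξ → x ∈ e.lhs → e.rhs = some h → vis e.rep = none →
      viss 0 = Function.update vis e.rep (some false) →
      (∀ i : Fin (ar h.f), MuImage Ξ (h.args i) (viss i.castSucc) (ts i) (viss i.succ)) →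
      viss (Fin.last (ar h.f)) e.rep = some false →
      MuImage Ξ x vis (.cons h.f ts)
        (Function.update (viss (Fin.last (ar h.f))) e.rep none)
  | muCase {x : ℕ} {vis : ℕ → Option Bool} {e : Equation ar} {h : HeadTree ar}
      (ts : Fin (ar h.f) → MuTree ar) (viss : Fin (ar h.f + 1) → ℕ → Option Bool) :
      e ∈ Ξ → x ∈ e.lhs → e.rhs = some h → vis e.rep = none →
      viss 0 = Function.update vis e.rep (some false) →
      (∀ i : Fin (ar h.f), MuImage Ξ (h.args i) (viss i.castSucc) (ts i) (viss i.succ)) →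
      viss (Fin.last (ar h.f)) e.rep = some true →
      MuImage Ξ x vis (.mu e.rep (.cons h.f ts))
        (Function.update (viss (Fin.last (ar h.f))) e.rep none)

end RT

namespace RT

variable {ar : ℕ → ℕ}

lemma findEq_eq_of_mem (Ξ : EqSystem ar) (hΞ : SystemWf Ξ) {e : Equation ar} {x : ℕ}
    (he : e ∈ Ξ) (hx : x ∈ e.lhs) : findEq Ξ x = some e := by
  have hex : ∃ e ∈ Ξ, x ∈ e.lhs := ⟨e, he, hx⟩
  rw [findEq, dif_pos hex]
  congr 1
  by_contra hne
  exact Finset.disjoint_left.mp (hΞ.2 _ hex.choose_spec.1 _ he hne) hex.choose_spec.2 hx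

lemma rep_injOn (Ξ : EqSystem ar) (hΞ : SystemWf Ξ) {e e' : Equation ar}
    (he : e ∈ Ξ) (he' : e' ∈ Ξ) (h : e.rep = e'.rep) : e = e' := by
  by_contra hne
  exact Finset.disjoint_left.mp (hΞ.2 _ he _ he' hne) ((hΞ.1 e he).2) (h ▸ (hΞ.1 e' he').2)

lemma rootSet_eq_image (Ξ : EqSystem ar) (hΞ : SystemWf Ξ) :
    rootSet Ξ = Ξ.image Equation.rep := by
  ext z
  simp only [rootSet, Finset.mem_filter, domSys, Finset.mem_biUnion, Finset.mem_image]
  constructor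
  · rintro ⟨⟨e, he, hz⟩, hroot⟩
    refine ⟨e, he, ?_⟩
    rw [find, findEq_eq_of_mem Ξ hΞ he hz] at hroot
    exact hroot
  · rintro ⟨e, he, rfl⟩
    refine ⟨⟨e, he, (hΞ.1 e he).2⟩, ?_⟩
    rw [find, findEq_eq_of_mem Ξ hΞ he (hΞ.1 e he).2]

/-- If distinct variables `x`, `y` lie in two different equations
of `Ξ` (with distinct representatives `x′ ≠ y′`), then the system produced by
`union_Ξ(x, y)` has exactly one fewer root than `Ξ`: one of `x′`, `y′` ceases
to be a root, and no new roots are created. -/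
theorem union_decreases_roots_by_one (ar : ℕ → ℕ) (Ξ : EqSystem ar) (hΞ : SystemWf Ξ)
    (x y : ℕ) (hxy : x ≠ y) (e₁ e₂ : Equation ar)
    (he₁ : e₁ ∈ Ξ) (hx : x ∈ e₁.lhs) (he₂ : e₂ ∈ Ξ) (hy : y ∈ e₂.lhs)
    (hrep : e₁.rep ≠ e₂.rep) :
    (rootSet (unionVar Ξ x y).1).card + 1 = (rootSet Ξ).card ∧
      (rootSet (unionVar Ξ x y).1 = rootSet Ξ \ {e₁.rep} ∨
        rootSet (unionVar Ξ x y).1 = rootSet Ξ \ {e₂.rep}) := by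
  have hfx := findEq_eq_of_mem Ξ hΞ he₁ hx
  have hfy := findEq_eq_of_mem Ξ hΞ he₂ hy
  have hne : e₁ ≠ e₂ := fun h => hrep (h ▸ rfl)
  set e' : Equation ar := ⟨e₁.lhs ∪ e₂.lhs, e₁.rep, e₁.rhs⟩ with he'def
  have hu : (unionVar Ξ x y).1 = addEq Ξ e' := by
    simp only [unionVar, hfx, hfy, if_neg hxy, if_neg hne]
    rfl
  have hwf' : SystemWf (addEq Ξ e') := by
    constructor
    · intro a ha
      rw [addEq, Finset.mem_insert] at ha
      rcases ha with rfl | ha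
      · exact ⟨⟨x, Finset.mem_union_left _ hx⟩, Finset.mem_union_left _ (hΞ.1 e₁ he₁).2⟩
      · exact hΞ.1 a (Finset.mem_filter.mp ha).1
    · intro a ha b hb hab
      rw [addEq, Finset.mem_insert] at ha hb
      rcases ha with rfl | ha
      · rcases hb with rfl | hb
        · exact absurd rfl hab
        · exact ((Finset.mem_filter.mp hb).2).symm
      · rcases hb with rfl | hb
        · exact (Finset.mem_filter.mp ha).2
        · exact hΞ.2 _ (Finset.mem_filter.mp ha).1 _ (Finset.mem_filter.mp hb).1 hab
  have hfilter : Ξ.filter (fun a => Disjoint a.lhs e'.lhs) = (Ξ.erase e₁).erase e₂ := by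
    ext a
    simp only [Finset.mem_filter, Finset.mem_erase]
    constructor
    · rintro ⟨ha, hd⟩
      have hd1 : a ≠ e₁ := by
        rintro rfl
        exact Finset.disjoint_left.mp hd hx (Finset.mem_union_left _ hx)
      have hd2 : a ≠ e₂ := by
        rintro rfl
        exact Finset.disjoint_left.mp hd hy (Finset.mem_union_right _ hy)
      exact ⟨hd2, hd1, ha⟩
    · rintro ⟨hd2, hd1, ha⟩
      refine ⟨ha, ?_⟩
      show Disjoint a.lhs (e₁.lhs ∪ e₂.lhs)
      exact Finset.disjoint_union_right.mpr ⟨hΞ.2 _ ha _ he₁ hd1, hΞ.2 _ ha _ he₂ hd2⟩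
  have himg : (addEq Ξ e' : EqSystem ar).image Equation.rep
      = Ξ.image Equation.rep \ {e₂.rep} := by
    rw [addEq, hfilter]
    ext z
    simp only [Finset.image_insert, Finset.mem_insert, Finset.mem_image, Finset.mem_erase,
      Finset.mem_sdiff, Finset.mem_singleton]
    constructor
    · rintro (rfl | ⟨a, ⟨ha2, ha1, ha⟩, rfl⟩)
      · exact ⟨⟨e₁, he₁, rfl⟩, hrep⟩
      · exact ⟨⟨a, ha, rfl⟩, fun h => ha2 (rep_injOn Ξ hΞ ha he₂ h)⟩
    · rintro ⟨⟨a, ha, rfl⟩, hz⟩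
      by_cases h1 : a = e₁
      · subst h1; exact Or.inl rfl
      · exact Or.inr ⟨a, ⟨fun h => hz (h ▸ rfl), h1, ha⟩, rfl⟩
  have hroots' : rootSet (unionVar Ξ x y).1 = rootSet Ξ \ {e₂.rep} := by
    rw [hu, rootSet_eq_image _ hwf', himg, rootSet_eq_image Ξ hΞ]
  have hmem : e₂.rep ∈ rootSet Ξ := by
    rw [rootSet_eq_image Ξ hΞ]; exact Finset.mem_image_of_mem _ he₂
  refine ⟨?_, Or.inr hroots'⟩
  rw [hroots', Finset.card_sdiff_of_subset (Finset.singleton_subset_iff.mpr hmem), Finset.card_singleton]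
  have := Finset.card_pos.mpr ⟨_, hmem⟩
  omega

end RT
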